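/- Let H be a separable complex Hilbert space, A a non-negative injective self-adjoint operator, and c : [0,∞) → ℝ of bounded variation with inf_{t≥0} c(t) > 0 and limit c_∞ = lim_{t→∞} c(t). Let τ(t) = ∫₀ᵗ c(s)ds. For y₁, y₂ ∈ H with (y₁,y₂) ≠ (0,0), set w₁(t) = exp(iτ(t)A^{1/2})y₁ + exp(-iτ(t)A^{1/2})y₂ and w₂(t) = i c(t) exp(iτ(t)A^{1/2})y₁ - i c(t) exp(-iτ(t)A^{1/2})y₂. Then (1/T)∫₀ᵀ ‖w₂(t)‖² dt → c_∞²(‖y₁‖² + ‖y₂‖²) and c_∞²·(1/T)∫₀ᵀ ‖w₁(t)‖² dt → c_∞²(‖y₁‖²+‖y₂‖²) as T→∞, and this common limit is nonzero. -/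

import Mathlib

/-!
Expanding the squares, both averages reduce to averages of `c ^ 2` and of the cross term
`G t = Re ⟪y₁, U (-2 τ t) y₂⟫`, weighted by `c ^ 2` in the first case. Since `c → c∞ ≠ 0`, a
Cesàro argument shows that it suffices to prove that the average of `c G` tends to `0`.
For `y₂ = S w` in the range of the generator, `c t ⟪y₁, U (-2 τ t) y₂⟫` is a constant multiple
of the derivative of `t ↦ ⟪y₁, U (-2 τ t) w⟫`, so its integral stays bounded. The averages are
uniformly Lipschitz in `y₂`, and the range of `S` is dense (this is where injectivity of `A`
enters), so they tend to `0` for every `y₂`. The fundamental theorem of calculus applies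
because `τ' = c` off the countable set of discontinuities of the function of bounded variation `c`.
-/

open MeasureTheory Filter Topology
open Set
open scoped InnerProductSpace

lemma uIcc_subset_Ici_of_le {a b : ℝ} (h : a ≤ b) : uIcc a b ⊆ Ici a := by
  rw [uIcc_of_le h]
  exact Icc_subset_Ici_self

noncomputable def timeAverage (g : ℝ → ℝ) (T : ℝ) : ℝ := (1 / T) * ∫ t in (0:ℝ)..T, g t

section TimeAverage

variable {g h : ℝ → ℝ} {T : ℝ}

lemma timeAverage_const_mul (r : ℝ) (g : ℝ → ℝ) (T : ℝ) :
    timeAverage (fun t => r * g t) T = r * timeAverage g T := by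
  simp only [timeAverage, intervalIntegral.integral_const_mul]
  ring

lemma timeAverage_add (hg : IntervalIntegrable g volume 0 T)
    (hh : IntervalIntegrable h volume 0 T) :
    timeAverage (fun t => g t + h t) T = timeAverage g T + timeAverage h T := by
  simp only [timeAverage, intervalIntegral.integral_add hg hh, mul_add]

lemma timeAverage_sub (hg : IntervalIntegrable g volume 0 T)
    (hh : IntervalIntegrable h volume 0 T) :
    timeAverage (fun t => g t - h t) T = timeAverage g T - timeAverage h T := by
  simp only [timeAverage, intervalIntegral.integral_sub hg hh, mul_sub]

lemma timeAverage_const (r : ℝ) (hT : T ≠ 0) : timeAverage (fun _ => r) T = r := by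
  simp [timeAverage, hT]

lemma abs_timeAverage_le {C : ℝ} (hT : 0 < T) (hC : |∫ t in (0:ℝ)..T, g t| ≤ C) :
    |timeAverage g T| ≤ C / T := by
  rw [timeAverage, abs_mul, abs_of_pos (one_div_pos.2 hT), one_div_mul_eq_div]
  gcongr

lemma tendsto_timeAverage_zero_of_abs_integral_le {C : ℝ}
    (hC : ∀ T, 0 ≤ T → |∫ t in (0:ℝ)..T, g t| ≤ C) :
    Tendsto (timeAverage g) atTop (𝓝 0) := by
  refine squeeze_zero_norm' ?_
    (tendsto_const_nhds.div_atTop tendsto_id : Tendsto (fun T => C / T) _ _)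
  filter_upwards [eventually_gt_atTop 0] with T hT
  exact abs_timeAverage_le hT (hC T hT.le)

lemma tendsto_timeAverage_zero_of_tendsto_zero
    (hg : ∀ T, 0 ≤ T → IntervalIntegrable g volume 0 T) (hg0 : Tendsto g atTop (𝓝 0)) :
    Tendsto (timeAverage g) atTop (𝓝 0) := by
  rw [Metric.tendsto_nhds]
  intro ε hε
  obtain ⟨T₀, hT₀⟩ := eventually_atTop.1 <|
    (hg0.eventually (Metric.closedBall_mem_nhds 0 (half_pos hε))).and (eventually_ge_atTop 0)
  set C := |∫ t in (0:ℝ)..T₀, g t|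
  have hint : ∀ T, T₀ ≤ T → |∫ t in (0:ℝ)..T, g t| ≤ C + ε / 2 * T := by
    intro T hT
    have hT₀0 := (hT₀ T₀ le_rfl).2
    have htail : ‖∫ t in T₀..T, g t‖ ≤ ε / 2 * |T - T₀| :=
      intervalIntegral.norm_integral_le_of_norm_le_const fun t ht => by
        simpa using (hT₀ t (uIoc_of_le hT ▸ ht).1.le).1
    rw [← intervalIntegral.integral_add_adjacent_intervals (hg T₀ hT₀0)
      ((hg T₀ hT₀0).symm.trans (hg T (hT₀0.trans hT)))]
    calc _ ≤ C + ε / 2 * |T - T₀| := (abs_add_le _ _).trans (by gcongr; exact htail)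
      _ ≤ C + ε / 2 * T := by rw [abs_of_nonneg (sub_nonneg.2 hT)]; nlinarith
  filter_upwards [eventually_ge_atTop T₀, eventually_gt_atTop 0,
    (tendsto_const_nhds.div_atTop tendsto_id : Tendsto (fun T => C / T) _ _).eventually
      (gt_mem_nhds (half_pos hε))]
    with T hT hT0 hCT
  rw [Real.dist_eq, sub_zero]
  calc |timeAverage g T| ≤ (C + ε / 2 * T) / T := abs_timeAverage_le hT0 (hint T hT)
    _ = C / T + ε / 2 := by field_simp
    _ < ε := by linarith

lemma tendsto_timeAverage_of_tendsto {L : ℝ} (hg : ∀ T, 0 ≤ T → IntervalIntegrable g volume 0 T)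
    (hgL : Tendsto g atTop (𝓝 L)) : Tendsto (timeAverage g) atTop (𝓝 L) := by
  have h := tendsto_timeAverage_zero_of_tendsto_zero
    (fun T hT => (hg T hT).sub intervalIntegrable_const) (tendsto_sub_nhds_zero_iff.2 hgL)
  refine (tendsto_sub_nhds_zero_iff.1 (h.congr' ?_))
  filter_upwards [eventually_gt_atTop 0] with T hT
  rw [timeAverage_sub (hg T hT.le) intervalIntegrable_const, timeAverage_const L hT.ne']

lemma tendsto_timeAverage_mul_sub_const_mul {L K : ℝ}
    (hh : ∀ T, 0 ≤ T → IntervalIntegrable h volume 0 T) (hhL : Tendsto h atTop (𝓝 L))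
    (hg : ContinuousOn g (Ici 0)) (hgK : ∀ t, |g t| ≤ K) :
    Tendsto (fun T => timeAverage (fun t => h t * g t) T - L * timeAverage g T) atTop (𝓝 0) := by
  have hhg : ∀ T, 0 ≤ T → IntervalIntegrable (fun t => h t * g t) volume 0 T := fun T hT =>
    (hh T hT).mul_continuousOn (hg.mono (uIcc_subset_Ici_of_le hT))
  have hLg : ∀ T, 0 ≤ T → IntervalIntegrable (fun t => L * g t) volume 0 T := fun T hT =>
    (hg.mono (uIcc_subset_Ici_of_le hT)).intervalIntegrable.const_mul L
  have h0 : Tendsto (fun t => h t * g t - L * g t) atTop (𝓝 0) := by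
    simpa only [sub_mul] using (tendsto_sub_nhds_zero_iff.2 hhL).zero_mul_isBoundedUnder_le
      (isBoundedUnder_of ⟨K, fun t => hgK t⟩)
  refine (tendsto_timeAverage_zero_of_tendsto_zero (fun T hT => (hhg T hT).sub (hLg T hT))
    h0).congr' ?_
  filter_upwards [eventually_ge_atTop 0] with T hT
  rw [timeAverage_sub (hhg T hT) (hLg T hT), timeAverage_const_mul]

lemma tendsto_timeAverage_mul_zero_of_tendsto_zero {L K : ℝ}
    (hh : ∀ T, 0 ≤ T → IntervalIntegrable h volume 0 T) (hhL : Tendsto h atTop (𝓝 L))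
    (hg : ContinuousOn g (Ici 0)) (hgK : ∀ t, |g t| ≤ K)
    (hg0 : Tendsto (timeAverage g) atTop (𝓝 0)) :
    Tendsto (timeAverage fun t => h t * g t) atTop (𝓝 0) := by
  simpa using (tendsto_timeAverage_mul_sub_const_mul hh hhL hg hgK).add (hg0.const_mul L)

lemma tendsto_timeAverage_zero_of_mul_tendsto_zero {L K : ℝ} (hL : L ≠ 0)
    (hh : ∀ T, 0 ≤ T → IntervalIntegrable h volume 0 T) (hhL : Tendsto h atTop (𝓝 L))
    (hg : ContinuousOn g (Ici 0)) (hgK : ∀ t, |g t| ≤ K)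
    (hhg0 : Tendsto (timeAverage fun t => h t * g t) atTop (𝓝 0)) :
    Tendsto (timeAverage g) atTop (𝓝 0) := by
  simpa [hL] using (hhg0.sub (tendsto_timeAverage_mul_sub_const_mul hh hhL hg hgK)).const_mul L⁻¹

end TimeAverage

section BoundedVariation

variable {f : ℝ → ℝ} {s : Set ℝ}

lemma BoundedVariationOn.abs_le (hf : BoundedVariationOn f s) {x₀ x : ℝ} (hx₀ : x₀ ∈ s)
    (hx : x ∈ s) : |f x| ≤ |f x₀| + (eVariationOn f s).toReal := by
  have := hf.dist_le hx hx₀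
  rw [Real.dist_eq] at this
  linarith [abs_sub_abs_le_abs_sub (f x) (f x₀)]

lemma LocallyBoundedVariationOn.intervalIntegrable (hf : LocallyBoundedVariationOn f s) {a b : ℝ}
    (hab : uIcc a b ⊆ s) : IntervalIntegrable f volume a b := by
  obtain ⟨p, q, hp, hq, rfl⟩ := hf.exists_monotoneOn_sub_monotoneOn
  exact (hp.mono hab).intervalIntegrable.sub (hq.mono hab).intervalIntegrable

lemma LocallyBoundedVariationOn.countable_not_continuousWithinAt
    (hf : LocallyBoundedVariationOn f s) : {x ∈ s | ¬ContinuousWithinAt f s x}.Countable := by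
  obtain ⟨p, q, hp, hq, rfl⟩ := hf.exists_monotoneOn_sub_monotoneOn
  refine (hp.countable_not_continuousWithinAt.union hq.countable_not_continuousWithinAt).mono ?_
  rintro x ⟨hxs, hx⟩
  by_contra! hpq
  simp only [mem_union, mem_ofPred_eq, not_or, not_and, not_not] at hpq
  exact hx ((hpq.1 hxs).sub (hpq.2 hxs))

lemma LocallyBoundedVariationOn.exists_countable_hasDerivAt_primitive {a : ℝ}
    (hf : LocallyBoundedVariationOn f (Ici a)) :
    ∃ E : Set ℝ, E.Countable ∧ ∀ t ∈ Ioi a \ E, HasDerivAt (fun u => ∫ s in a..u, f s) (f t) t := by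
  refine ⟨_, hf.countable_not_continuousWithinAt, fun t ⟨hat, htE⟩ => ?_⟩
  have hcont : ContinuousAt f t := by
    by_contra h
    exact htE ⟨mem_Ici_of_Ioi hat, fun h' => h (h'.continuousAt (Ici_mem_nhds hat))⟩
  have hint : IntervalIntegrable f volume a (t + 1) :=
    hf.intervalIntegrable (uIcc_subset_Ici_of_le (by linarith [mem_Ioi.1 hat]))
  refine intervalIntegral.integral_hasDerivAt_right (hint.mono_set ?_) ?_ hcont
  · rw [uIcc_of_le (le_of_lt hat), uIcc_of_le (by linarith [mem_Ioi.1 hat])]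
    exact Icc_subset_Icc_right (by linarith)
  · exact AEStronglyMeasurable.stronglyMeasurableAtFilter_of_mem hint.1.aestronglyMeasurable
      (Ioc_mem_nhds hat (by linarith))

end BoundedVariation

lemma continuousOn_primitive_Ici {f : ℝ → ℝ} {a : ℝ}
    (hf : ∀ b, a ≤ b → IntervalIntegrable f volume a b) :
    ContinuousOn (fun u => ∫ s in a..u, f s) (Ici a) := fun t ht => by
  have hat : a ≤ t + 1 := by linarith [mem_Ici.1 ht]
  have h := intervalIntegral.continuousOn_primitive_interval' (hf (t + 1) hat) left_mem_uIcc
  rw [uIcc_of_le hat] at h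
  refine (h t ⟨ht, by linarith⟩).mono_of_mem_nhdsWithin ?_
  rw [← Ici_inter_Iic]
  exact inter_mem_nhdsWithin _ (Iic_mem_nhds (by linarith))

section UnitaryGroup

variable {H : Type*} [NormedAddCommGroup H] [InnerProductSpace ℂ H] {U : ℝ → H →L[ℂ] H}

lemma norm_inner_apply_le (hiso : ∀ (s : ℝ) (x : H), ‖U s x‖ = ‖x‖) (s : ℝ) (y x : H) :
    ‖⟪y, U s x⟫_ℂ‖ ≤ ‖y‖ * ‖x‖ :=
  (norm_inner_le_norm _ _).trans_eq (by rw [hiso])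

lemma inner_apply_apply_neg (hgrp : ∀ s t : ℝ, U (s + t) = (U s).comp (U t))
    (hadj : ∀ (s : ℝ) (x y : H), ⟪U s x, y⟫_ℂ = ⟪x, U (-s) y⟫_ℂ) (s : ℝ) (x y : H) :
    ⟪U s x, U (-s) y⟫_ℂ = ⟪x, U (-(2 * s)) y⟫_ℂ := by
  rw [hadj, ← ContinuousLinearMap.comp_apply, ← hgrp]
  ring_nf

lemma norm_apply_add_apply_neg_sq (hgrp : ∀ s t : ℝ, U (s + t) = (U s).comp (U t))
    (hadj : ∀ (s : ℝ) (x y : H), ⟪U s x, y⟫_ℂ = ⟪x, U (-s) y⟫_ℂ)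
    (hiso : ∀ (s : ℝ) (x : H), ‖U s x‖ = ‖x‖) (s : ℝ) (x y : H) :
    ‖U s x + U (-s) y‖ ^ 2 = ‖x‖ ^ 2 + ‖y‖ ^ 2 + 2 * (⟪x, U (-(2 * s)) y⟫_ℂ).re := by
  rw [norm_add_sq (𝕜 := ℂ), hiso, hiso, inner_apply_apply_neg hgrp hadj, RCLike.re_to_complex]
  ring

lemma norm_smul_apply_sub_smul_apply_neg_sq (hgrp : ∀ s t : ℝ, U (s + t) = (U s).comp (U t))
    (hadj : ∀ (s : ℝ) (x y : H), ⟪U s x, y⟫_ℂ = ⟪x, U (-s) y⟫_ℂ)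
    (hiso : ∀ (s : ℝ) (x : H), ‖U s x‖ = ‖x‖) (z : ℂ) (s : ℝ) (x y : H) :
    ‖z • U s x - z • U (-s) y‖ ^ 2
      = ‖z‖ ^ 2 * (‖x‖ ^ 2 + ‖y‖ ^ 2 - 2 * (⟪x, U (-(2 * s)) y⟫_ℂ).re) := by
  rw [← smul_sub, norm_smul, mul_pow, norm_sub_sq (𝕜 := ℂ), hiso, hiso,
    inner_apply_apply_neg hgrp hadj, RCLike.re_to_complex]
  ring

lemma integral_mul_re_inner_eq_of_hasDerivAt {w z : H}
    (hder : ∀ s : ℝ, HasDerivAt (fun r : ℝ => U r w) (Complex.I • U s z) s)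
    {θ a : ℝ → ℝ} {E : Set ℝ} (hE : E.Countable) {T : ℝ} (hT : 0 ≤ T)
    (hθc : ContinuousOn θ (Icc 0 T)) (hθ : ∀ t ∈ Ioo 0 T \ E, HasDerivAt θ (a t) t) (y : H)
    (hint : IntervalIntegrable (fun t => a t * (⟪y, U (θ t) z⟫_ℂ).re) volume 0 T) :
    ∫ t in (0:ℝ)..T, a t * (⟪y, U (θ t) z⟫_ℂ).re
      = (⟪y, U (θ T) w⟫_ℂ).im - (⟪y, U (θ 0) w⟫_ℂ).im := by
  have horbit : Continuous fun r : ℝ => U r w :=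
    continuous_iff_continuousAt.2 fun s => (hder s).continuousAt
  refine integral_eq_of_hasDerivAt_off_countable_of_le (fun t => (⟪y, U (θ t) w⟫_ℂ).im) _ hT hE
    ?_ (fun t ht => ?_) hint
  · exact Complex.continuous_im.comp_continuousOn
      (continuousOn_const.inner (horbit.comp_continuousOn hθc))
  · have h := Complex.imCLM.hasFDerivAt.comp_hasDerivAt t
      ((hasDerivAt_const t y).inner ℂ ((hder (θ t)).scomp t (hθ t ht)))
    convert h using 1
    · rfl
    · simp only [Function.comp_apply, inner_zero_left, add_zero, Complex.imCLM_apply]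
      rw [← Complex.coe_smul, inner_smul_right, inner_smul_right]
      simp

lemma continuousOn_re_inner_apply_comp (hcont : ∀ x : H, Continuous fun s : ℝ => U s x)
    {θ : ℝ → ℝ} {s : Set ℝ} (hθ : ContinuousOn θ s) (y x : H) :
    ContinuousOn (fun t => (⟪y, U (θ t) x⟫_ℂ).re) s :=
  Complex.continuous_re.comp_continuousOn
    (continuousOn_const.inner ((hcont x).comp_continuousOn hθ))

lemma abs_timeAverage_mul_re_inner_le (hiso : ∀ (s : ℝ) (x : H), ‖U s x‖ = ‖x‖)
    {θ a : ℝ → ℝ} {M : ℝ} (haM : ∀ t, 0 ≤ t → |a t| ≤ M) {T : ℝ} (hT : 0 < T) (y x : H) :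
    |timeAverage (fun t => a t * (⟪y, U (θ t) x⟫_ℂ).re) T| ≤ M * (‖y‖ * ‖x‖) := by
  have hM : 0 ≤ M := (abs_nonneg _).trans (haM 0 le_rfl)
  have hbound : ‖∫ t in (0:ℝ)..T, a t * (⟪y, U (θ t) x⟫_ℂ).re‖ ≤ M * (‖y‖ * ‖x‖) * |T - 0| := by
    refine intervalIntegral.norm_integral_le_of_norm_le_const fun t ht => ?_
    rw [uIoc_of_le hT.le] at ht
    rw [norm_mul, Real.norm_eq_abs, Real.norm_eq_abs]
    exact mul_le_mul (haM t ht.1.le)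
      ((Complex.abs_re_le_norm _).trans (norm_inner_apply_le hiso _ _ _)) (abs_nonneg _) hM
  rw [sub_zero, abs_of_pos hT] at hbound
  exact (abs_timeAverage_le hT hbound).trans_eq (mul_div_cancel_right₀ _ hT.ne')

theorem tendsto_timeAverage_mul_re_inner
    (hiso : ∀ (s : ℝ) (x : H), ‖U s x‖ = ‖x‖)
    (hcont : ∀ x : H, Continuous fun s : ℝ => U s x)
    {D : Set H} {S : H → H}
    (hder : ∀ w ∈ D, ∀ s : ℝ, HasDerivAt (fun r : ℝ => U r w) (Complex.I • U s (S w)) s)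
    (hSdense : Dense (S '' D))
    {θ a : ℝ → ℝ} {E : Set ℝ} (hE : E.Countable) (hθc : ContinuousOn θ (Ici 0))
    (hθ : ∀ t ∈ Ioi 0 \ E, HasDerivAt θ (a t) t)
    (ha : ∀ T, 0 ≤ T → IntervalIntegrable a volume 0 T) {M : ℝ} (haM : ∀ t, 0 ≤ t → |a t| ≤ M)
    (y x : H) :
    Tendsto (timeAverage fun t => a t * (⟪y, U (θ t) x⟫_ℂ).re) atTop (𝓝 0) := by
  have hint : ∀ x T, 0 ≤ T →
      IntervalIntegrable (fun t => a t * (⟪y, U (θ t) x⟫_ℂ).re) volume 0 T := fun x T hT =>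
    (ha T hT).mul_continuousOn
      (continuousOn_re_inner_apply_comp hcont (hθc.mono (uIcc_subset_Ici_of_le hT)) y x)
  set F : Ioi (0:ℝ) → H → ℝ := fun T x => timeAverage (fun t => a t * (⟪y, U (θ t) x⟫_ℂ).re) T
  have hlip : ∀ T, LipschitzWith (M * ‖y‖).toNNReal (F T) := fun T =>
    LipschitzWith.of_dist_le' fun x x' => by
      rw [Real.dist_eq, dist_eq_norm, mul_assoc,
        ← timeAverage_sub (hint x T T.2.le) (hint x' T T.2.le)]
      simpa only [map_sub, inner_sub_right, Complex.sub_re, mul_sub] using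
        abs_timeAverage_mul_re_inner_le hiso haM T.2 y (x - x')
  have hclosed : IsClosed {x | Tendsto (F · x) atTop (𝓝 0)} :=
    (LipschitzWith.uniformEquicontinuous F _ hlip).equicontinuous.isClosed_setOfPred_tendsto
      continuous_const
  have hgen : S '' D ⊆ {x | Tendsto (F · x) atTop (𝓝 0)} := by
    rintro _ ⟨w, hw, rfl⟩
    refine tendsto_comp_val_Ioi_atTop.2 (tendsto_timeAverage_zero_of_abs_integral_le
      (C := 2 * (‖y‖ * ‖w‖)) fun T hT => ?_)
    have him : ∀ s, |(⟪y, U s w⟫_ℂ).im| ≤ ‖y‖ * ‖w‖ := fun s =>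
      (Complex.abs_im_le_norm _).trans (norm_inner_apply_le hiso _ _ _)
    rw [integral_mul_re_inner_eq_of_hasDerivAt (hder w hw) hE hT (hθc.mono Icc_subset_Ici_self)
      (fun t ht => hθ t ⟨ht.1.1, ht.2⟩) y (hint _ T hT)]
    linarith [abs_sub (⟪y, U (θ T) w⟫_ℂ).im (⟪y, U (θ 0) w⟫_ℂ).im, him (θ T), him (θ 0)]
  exact tendsto_comp_val_Ioi_atTop.1 <|
    hclosed.closure_subset_iff.2 hgen (hSdense.closure_eq ▸ mem_univ x)

theorem tendsto_timeAverage_re_inner_neg_two_mul_primitive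
    (hiso : ∀ (s : ℝ) (x : H), ‖U s x‖ = ‖x‖)
    (hcont : ∀ x : H, Continuous fun s : ℝ => U s x)
    {D : Set H} {S : H → H}
    (hder : ∀ w ∈ D, ∀ s : ℝ, HasDerivAt (fun r : ℝ => U r w) (Complex.I • U s (S w)) s)
    (hSdense : Dense (S '' D))
    {c : ℝ → ℝ} (hbv : BoundedVariationOn c (Ici 0)) {cinf : ℝ}
    (hcinf : Tendsto c atTop (𝓝 cinf)) (hcinf0 : cinf ≠ 0)
    {τ : ℝ → ℝ} (hτ : ∀ t, τ t = ∫ s in (0:ℝ)..t, c s) (y x : H) :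
    Tendsto (timeAverage fun t => (⟪y, U (-(2 * τ t)) x⟫_ℂ).re) atTop (𝓝 0) := by
  have hcint : ∀ T, 0 ≤ T → IntervalIntegrable c volume 0 T := fun T hT =>
    hbv.locallyBoundedVariationOn.intervalIntegrable (uIcc_subset_Ici_of_le hT)
  obtain ⟨E, hE, hτd⟩ := hbv.locallyBoundedVariationOn.exists_countable_hasDerivAt_primitive
  rw [← funext hτ] at hτd
  have hθc : ContinuousOn (fun t => -(2 * τ t)) (Ici 0) :=
    (((continuousOn_primitive_Ici hcint).congr fun t _ => hτ t).const_smul (2:ℝ)).neg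
  have ha : ∀ T, 0 ≤ T → IntervalIntegrable (fun t => -(2 * c t)) volume 0 T := fun T hT =>
    ((hcint T hT).const_mul 2).neg
  have haM : ∀ t, 0 ≤ t → |-(2 * c t)| ≤ 2 * (|c 0| + (eVariationOn c (Ici 0)).toReal) :=
    fun t ht => by
      rw [abs_neg, abs_mul, abs_two]
      exact mul_le_mul_of_nonneg_left (hbv.abs_le self_mem_Ici ht) zero_le_two
  refine tendsto_timeAverage_zero_of_mul_tendsto_zero (neg_ne_zero.2 (mul_ne_zero two_ne_zero hcinf0))
    ha (hcinf.const_mul 2).neg (continuousOn_re_inner_apply_comp hcont hθc y x)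
    (fun t => (Complex.abs_re_le_norm _).trans (norm_inner_apply_le hiso _ y x)) ?_
  exact tendsto_timeAverage_mul_re_inner hiso hcont hder hSdense hE hθc
    (fun t ht => ((hτd t ht).const_mul 2).neg) ha haM y x

lemma tendsto_timeAverage_norm_apply_add_apply_neg_sq
    (hgrp : ∀ s t : ℝ, U (s + t) = (U s).comp (U t))
    (hadj : ∀ (s : ℝ) (x y : H), ⟪U s x, y⟫_ℂ = ⟪x, U (-s) y⟫_ℂ)
    (hiso : ∀ (s : ℝ) (x : H), ‖U s x‖ = ‖x‖) {τ : ℝ → ℝ} {y₁ y₂ : H}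
    (hGc : ContinuousOn (fun t => (⟪y₁, U (-(2 * τ t)) y₂⟫_ℂ).re) (Ici 0))
    (hG : Tendsto (timeAverage fun t => (⟪y₁, U (-(2 * τ t)) y₂⟫_ℂ).re) atTop (𝓝 0)) :
    Tendsto (timeAverage fun t => ‖U (τ t) y₁ + U (-(τ t)) y₂‖ ^ 2) atTop
      (𝓝 (‖y₁‖ ^ 2 + ‖y₂‖ ^ 2)) := by
  have hlim := (hG.const_mul 2).const_add (‖y₁‖ ^ 2 + ‖y₂‖ ^ 2)
  rw [mul_zero, add_zero] at hlim
  refine hlim.congr' ?_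
  filter_upwards [eventually_gt_atTop 0] with T hT
  simp_rw [norm_apply_add_apply_neg_sq hgrp hadj hiso]
  rw [timeAverage_add intervalIntegrable_const
    ((hGc.mono (uIcc_subset_Ici_of_le hT.le)).intervalIntegrable.const_mul 2),
    timeAverage_const _ hT.ne', timeAverage_const_mul]

lemma tendsto_timeAverage_norm_smul_apply_sub_smul_apply_neg_sq
    (hgrp : ∀ s t : ℝ, U (s + t) = (U s).comp (U t))
    (hadj : ∀ (s : ℝ) (x y : H), ⟪U s x, y⟫_ℂ = ⟪x, U (-s) y⟫_ℂ)
    (hiso : ∀ (s : ℝ) (x : H), ‖U s x‖ = ‖x‖) {c τ : ℝ → ℝ} {cinf : ℝ}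
    (hc2 : ∀ T, 0 ≤ T → IntervalIntegrable (fun t => c t ^ 2) volume 0 T)
    (hcinf : Tendsto c atTop (𝓝 cinf)) {y₁ y₂ : H}
    (hGc : ContinuousOn (fun t => (⟪y₁, U (-(2 * τ t)) y₂⟫_ℂ).re) (Ici 0))
    (hG : Tendsto (timeAverage fun t => (⟪y₁, U (-(2 * τ t)) y₂⟫_ℂ).re) atTop (𝓝 0)) :
    Tendsto (timeAverage fun t => ‖(Complex.I * (c t : ℂ)) • U (τ t) y₁
        - (Complex.I * (c t : ℂ)) • U (-(τ t)) y₂‖ ^ 2) atTop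
      (𝓝 (cinf ^ 2 * (‖y₁‖ ^ 2 + ‖y₂‖ ^ 2))) := by
  have hc2G := tendsto_timeAverage_mul_zero_of_tendsto_zero hc2 (hcinf.pow 2) hGc
    (fun t => (Complex.abs_re_le_norm _).trans (norm_inner_apply_le hiso _ y₁ y₂)) hG
  have hlim := ((tendsto_timeAverage_of_tendsto hc2 (hcinf.pow 2)).const_mul
    (‖y₁‖ ^ 2 + ‖y₂‖ ^ 2)).sub (hc2G.const_mul 2)
  rw [mul_zero, sub_zero, mul_comm] at hlim
  refine hlim.congr' ?_
  filter_upwards [eventually_ge_atTop 0] with T hT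
  have hw : ∀ t, ‖(Complex.I * (c t : ℂ)) • U (τ t) y₁ - (Complex.I * (c t : ℂ)) • U (-(τ t)) y₂‖ ^ 2
      = (‖y₁‖ ^ 2 + ‖y₂‖ ^ 2) * c t ^ 2 - 2 * (c t ^ 2 * (⟪y₁, U (-(2 * τ t)) y₂⟫_ℂ).re) := by
    intro t
    rw [norm_smul_apply_sub_smul_apply_neg_sq hgrp hadj hiso, norm_mul, Complex.norm_I,
      Complex.norm_real, Real.norm_eq_abs, one_mul, sq_abs]
    ring
  simp_rw [hw]
  rw [timeAverage_sub ((hc2 T hT).const_mul _)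
    (((hc2 T hT).mul_continuousOn (hGc.mono (uIcc_subset_Ici_of_le hT))).const_mul 2),
    timeAverage_const_mul, timeAverage_const_mul]

end UnitaryGroup

theorem stmt5_general {H : Type*} [NormedAddCommGroup H] [InnerProductSpace ℂ H]
    (U : ℝ → H →L[ℂ] H)
    (hgrp : ∀ s t : ℝ, U (s + t) = (U s).comp (U t))
    (hiso : ∀ (s : ℝ) (x : H), ‖U s x‖ = ‖x‖)
    (hadj : ∀ (s : ℝ) (x y : H), (inner ℂ (U s x) y : ℂ) = inner ℂ x (U (-s) y))
    (hcont : ∀ x : H, Continuous fun s : ℝ => U s x)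
    (D : Set H) (S : H → H)
    (hder : ∀ w ∈ D, ∀ s : ℝ, HasDerivAt (fun r : ℝ => U r w) (Complex.I • U s (S w)) s)
    (hSdense : Dense (S '' D))
    (c : ℝ → ℝ) (hbv : BoundedVariationOn c (Set.Ici 0))
    (c₀ : ℝ) (hc₀ : 0 < c₀) (hcge : ∀ t : ℝ, 0 ≤ t → c₀ ≤ c t)
    (cinf : ℝ) (hcinf : Tendsto c atTop (𝓝 cinf))
    (τ : ℝ → ℝ) (hτ : ∀ t : ℝ, τ t = ∫ s in (0:ℝ)..t, c s)
    (y₁ y₂ : H) (hne : ¬(y₁ = 0 ∧ y₂ = 0)) :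
    Tendsto (fun T : ℝ =>
        (1 / T) * ∫ t in (0:ℝ)..T,
          ‖(Complex.I * (c t : ℂ)) • U (τ t) y₁
            - (Complex.I * (c t : ℂ)) • U (-(τ t)) y₂‖ ^ 2)
      atTop (𝓝 (cinf ^ 2 * (‖y₁‖ ^ 2 + ‖y₂‖ ^ 2))) ∧
    Tendsto (fun T : ℝ =>
        cinf ^ 2 * ((1 / T) * ∫ t in (0:ℝ)..T, ‖U (τ t) y₁ + U (-(τ t)) y₂‖ ^ 2))
      atTop (𝓝 (cinf ^ 2 * (‖y₁‖ ^ 2 + ‖y₂‖ ^ 2))) ∧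
    cinf ^ 2 * (‖y₁‖ ^ 2 + ‖y₂‖ ^ 2) ≠ 0 := by
  have hcinf0 : 0 < cinf := hc₀.trans_le (ge_of_tendsto hcinf (eventually_atTop.2 ⟨0, hcge⟩))
  have hN : ‖y₁‖ ^ 2 + ‖y₂‖ ^ 2 ≠ 0 := by
    contrapose! hne
    simpa using (add_eq_zero_iff_of_nonneg (sq_nonneg _) (sq_nonneg _)).1 hne
  have hcint : ∀ T, 0 ≤ T → IntervalIntegrable c volume 0 T := fun T hT =>
    hbv.locallyBoundedVariationOn.intervalIntegrable (uIcc_subset_Ici_of_le hT)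
  have hc2 : ∀ T, 0 ≤ T → IntervalIntegrable (fun t => c t ^ 2) volume 0 T := fun T hT => by
    simpa only [sq, Pi.mul_def] using (hbv.mul hbv).locallyBoundedVariationOn.intervalIntegrable
      (uIcc_subset_Ici_of_le hT)
  have hGc := continuousOn_re_inner_apply_comp hcont
    (((continuousOn_primitive_Ici hcint).congr fun t _ => hτ t).const_smul (2:ℝ)).neg y₁ y₂
  have hG := tendsto_timeAverage_re_inner_neg_two_mul_primitive hiso hcont hder hSdense hbv hcinf
    hcinf0.ne' hτ y₁ y₂
  exact ⟨tendsto_timeAverage_norm_smul_apply_sub_smul_apply_neg_sq hgrp hadj hiso hc2 hcinf hGc hG,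
    (tendsto_timeAverage_norm_apply_add_apply_neg_sq hgrp hadj hiso hGc hG).const_mul _,
    mul_ne_zero (pow_ne_zero 2 hcinf0.ne') hN⟩

/-- For the strongly continuous unitary group `U s = exp(i s A^{1/2})` generated by
`A^{1/2}`, `A` non-negative injective self-adjoint on a separable complex Hilbert space
(encoded via group, isometry, adjoint, continuity, fixed-point-triviality and the
generator derivative/dense-range properties), a bounded-variation coefficient `c`
with `inf c > 0` and `c → c∞`, `τ(t) = ∫₀ᵗ c`, and `(y₁, y₂) ≠ (0,0)`:
with `w₁(t) = U(τ t)y₁ + U(-τ t)y₂` and `w₂(t) = i c(t) U(τ t)y₁ - i c(t) U(-τ t)y₂`,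
the time averages of `‖w₂‖²` and `c∞²‖w₁‖²` both converge to
`c∞²(‖y₁‖² + ‖y₂‖²)`, which is nonzero. -/
theorem stmt5 {H : Type*} [NormedAddCommGroup H] [InnerProductSpace ℂ H]
    [CompleteSpace H] [TopologicalSpace.SeparableSpace H]
    (U : ℝ → H →L[ℂ] H)
    (hgrp : ∀ s t : ℝ, U (s + t) = (U s).comp (U t))
    (h0 : U 0 = ContinuousLinearMap.id ℂ H)
    (hiso : ∀ (s : ℝ) (x : H), ‖U s x‖ = ‖x‖)
    (hadj : ∀ (s : ℝ) (x y : H), (inner ℂ (U s x) y : ℂ) = inner ℂ x (U (-s) y))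
    (hcont : ∀ x : H, Continuous fun s : ℝ => U s x)
    (hfix : ∀ x : H, (∀ t : ℝ, U t x = x) → x = 0)
    (D : Set H) (S : H → H)
    (hder : ∀ w ∈ D, ∀ s : ℝ, HasDerivAt (fun r : ℝ => U r w) (Complex.I • U s (S w)) s)
    (hSdense : Dense (S '' D))
    (c : ℝ → ℝ) (hbv : BoundedVariationOn c (Set.Ici 0))
    (c₀ : ℝ) (hc₀ : 0 < c₀) (hcge : ∀ t : ℝ, 0 ≤ t → c₀ ≤ c t)
    (cinf : ℝ) (hcinf : Tendsto c atTop (𝓝 cinf))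
    (τ : ℝ → ℝ) (hτ : ∀ t : ℝ, τ t = ∫ s in (0:ℝ)..t, c s)
    (y₁ y₂ : H) (hne : ¬(y₁ = 0 ∧ y₂ = 0)) :
    Tendsto (fun T : ℝ =>
        (1 / T) * ∫ t in (0:ℝ)..T,
          ‖(Complex.I * (c t : ℂ)) • U (τ t) y₁
            - (Complex.I * (c t : ℂ)) • U (-(τ t)) y₂‖ ^ 2)
      atTop (𝓝 (cinf ^ 2 * (‖y₁‖ ^ 2 + ‖y₂‖ ^ 2))) ∧
    Tendsto (fun T : ℝ =>
        cinf ^ 2 * ((1 / T) * ∫ t in (0:ℝ)..T, ‖U (τ t) y₁ + U (-(τ t)) y₂‖ ^ 2))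
      atTop (𝓝 (cinf ^ 2 * (‖y₁‖ ^ 2 + ‖y₂‖ ^ 2))) ∧
    cinf ^ 2 * (‖y₁‖ ^ 2 + ‖y₂‖ ^ 2) ≠ 0 :=
  stmt5_general U hgrp hiso hadj hcont D S hder hSdense c hbv c₀ hc₀ hcge cinf hcinf τ hτ y₁ y₂ hne
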